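/- arXiv:1606.06891 — 4 statements merged into one kernel-verified Lean document; each statement's English description precedes it below -/
import Mathlib

section
/- If û : ℝ → [0,1] is a monotone increasing C¹ wave profile with limits a₁ at -∞ and a₂ at +∞, and there exists c > 0 such that c·û'(x) = û(x) - (w ∗ F(û))(x) for all x, where w ≥ 0 with ∫w = 1 and F : ℝ → [0,1], then û' ∈ L²(ℝ), with ∫ û'(x)² dx ≤ (a₂/c + 1)(a₂ - a₁). -/
open MeasureTheory Filter

/-!
Monotonicity makes `û' ≥ 0`, so `û'` is integrable with `∫ û' = a₂ - a₁`. Since the convolution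
term is nonnegative, the wave equation gives `c û' ≤ û ≤ a₂`, hence
`û'² ≤ (a₂ / c) û'` and `∫ û'² ≤ (a₂ / c)(a₂ - a₁)`.
-/

theorem intervalIntegrable_deriv_of_nonneg' {f f' : ℝ → ℝ} (hderiv : ∀ x, HasDerivAt f (f' x) x)
    (hf' : ∀ x, 0 ≤ f' x) (a b : ℝ) : IntervalIntegrable f' volume a b :=
  intervalIntegral.intervalIntegrable_deriv_of_nonneg
    (HasDerivAt.continuousOn fun x _ => hderiv x) (fun x _ => hderiv x) fun x _ => hf' x

theorem integrable_deriv_of_nonneg_of_tendsto {f f' : ℝ → ℝ} {m n : ℝ}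
    (hderiv : ∀ x, HasDerivAt f (f' x) x) (hf' : ∀ x, 0 ≤ f' x)
    (hbot : Tendsto f atBot (nhds m)) (htop : Tendsto f atTop (nhds n)) : Integrable f' := by
  refine integrable_of_intervalIntegral_norm_tendsto (n - m)
    (fun x => (intervalIntegrable_deriv_of_nonneg' hderiv hf' (-x) x).1)
    tendsto_neg_atTop_atBot tendsto_id ?_
  have hFTC : ∀ x, ∫ y in -x..x, ‖f' y‖ = f x - f (-x) := fun x => by
    simp_rw [Real.norm_of_nonneg (hf' _)]
    exact intervalIntegral.integral_eq_sub_of_hasDerivAt (fun y _ => hderiv y)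
      (intervalIntegrable_deriv_of_nonneg' hderiv hf' _ _)
  exact (htop.sub (hbot.comp tendsto_neg_atTop_atBot)).congr fun x => (hFTC x).symm

theorem MeasureTheory.Integrable.integral_sq_le_mul_integral {α : Type*} [MeasurableSpace α]
    {μ : Measure α} {g : α → ℝ} {M : ℝ} (hg : Integrable g μ) (hg_nonneg : ∀ x, 0 ≤ g x)
    (hg_le : ∀ x, g x ≤ M) :
    Integrable (fun x => g x ^ 2) μ ∧ ∫ x, g x ^ 2 ∂μ ≤ M * ∫ x, g x ∂μ := by
  have hsq_le : ∀ x, g x ^ 2 ≤ M * g x := fun x => by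
    rw [sq]
    exact mul_le_mul_of_nonneg_right (hg_le x) (hg_nonneg x)
  have hint : Integrable (fun x => g x ^ 2) μ := by
    refine (hg.const_mul M).mono (hg.aestronglyMeasurable.pow 2) (Eventually.of_forall fun x => ?_)
    simp only [Real.norm_eq_abs, abs_of_nonneg (sq_nonneg (g x))]
    exact (hsq_le x).trans (le_abs_self _)
  refine ⟨hint, ?_⟩
  rw [← integral_const_mul]
  exact integral_mono hint (hg.const_mul M) hsq_le

theorem traveling_wave_profile_deriv_L2_general
    (w F uhat uhat' : ℝ → ℝ) (a₁ a₂ c : ℝ)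
    (hw_nonneg : ∀ x, 0 ≤ w x)
    (hF : ∀ x, F x ∈ Set.Icc (0:ℝ) 1)
    (huhat_mono : Monotone uhat)
    (huhat_deriv : ∀ x, HasDerivAt uhat (uhat' x) x)
    (huhat_bot : Tendsto uhat atBot (nhds a₁))
    (huhat_top : Tendsto uhat atTop (nhds a₂))
    (ha : a₁ < a₂) (hc : 0 < c)
    (hTW : ∀ x, c * uhat' x = uhat x - ∫ y, w (x - y) * F (uhat y)) :
    Integrable (fun x => (uhat' x) ^ 2) ∧
      ∫ x, (uhat' x) ^ 2 ≤ (a₂ / c + 1) * (a₂ - a₁) := by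
  have hderiv_nonneg : ∀ x, 0 ≤ uhat' x := fun x =>
    (huhat_deriv x).deriv ▸ huhat_mono.deriv_nonneg
  have hderiv_le : ∀ x, uhat' x ≤ a₂ / c := fun x => by
    have hconv : 0 ≤ ∫ y, w (x - y) * F (uhat y) :=
      integral_nonneg fun y => mul_nonneg (hw_nonneg _) (hF _).1
    rw [le_div_iff₀ hc, mul_comm]
    linarith [hTW x, huhat_mono.ge_of_tendsto huhat_top x]
  have hint := integrable_deriv_of_nonneg_of_tendsto huhat_deriv hderiv_nonneg huhat_bot huhat_top
  have hmass : ∫ x, uhat' x = a₂ - a₁ :=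
    integral_of_hasDerivAt_of_tendsto huhat_deriv hint huhat_bot huhat_top
  obtain ⟨hint_sq, hbound⟩ := hint.integral_sq_le_mul_integral hderiv_nonneg hderiv_le
  refine ⟨hint_sq, hbound.trans ?_⟩
  rw [hmass]
  exact mul_le_mul_of_nonneg_right (le_add_of_nonneg_right zero_le_one) (sub_nonneg.2 ha.le)

/-- square-integrability of the derivative of a traveling wave profile
with positive speed, with the explicit bound `(a₂/c + 1)(a₂ - a₁)`. -/
theorem traveling_wave_profile_deriv_L2
    (w F uhat uhat' : ℝ → ℝ) (a₁ a₂ c : ℝ)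
    (hw_nonneg : ∀ x, 0 ≤ w x) (hw_int : Integrable w)
    (hw_mass : ∫ x, w x = 1)
    (hF : ∀ x, F x ∈ Set.Icc (0:ℝ) 1)
    (huhat_mono : Monotone uhat)
    (huhat_deriv : ∀ x, HasDerivAt uhat (uhat' x) x)
    (huhat'_cont : Continuous uhat')
    (huhat_range : ∀ x, uhat x ∈ Set.Icc (0:ℝ) 1)
    (huhat_bot : Tendsto uhat atBot (nhds a₁))
    (huhat_top : Tendsto uhat atTop (nhds a₂))
    (ha : a₁ < a₂) (hc : 0 < c)
    (hTW : ∀ x, c * uhat' x = uhat x - ∫ y, w (x - y) * F (uhat y)) :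
    Integrable (fun x => (uhat' x) ^ 2) ∧
      ∫ x, (uhat' x) ^ 2 ≤ (a₂ / c + 1) * (a₂ - a₁) :=
  traveling_wave_profile_deriv_L2_general w F uhat uhat' a₁ a₂ c hw_nonneg hF huhat_mono huhat_deriv
    huhat_bot huhat_top ha hc hTW
end

section
/- Monotone lower bound for the drift at the traveling wave: let u^{TW}_t(x) = û(x - ct) with c > 0 be a traveling wave solution of u_t = -u + w∗F(u), û increasing from a₁ to a₂, F increasing. Define the truncated drift b̂_k(t) = -u^{TW}_t(k/m) + ∑_l w^m_{kl} F(u^{TW}_t(l/m)) + w^{m,+}_k F(u^{TW}_t(L)) + w^{m,-}_k F(u^{TW}_t(-L)) with w^m_{kl} = ∫_{l/m}^{(l+1)/m} w(k/m - y) dy, w^{m,+}_k = ∫_L^∞ w(k/m - y)dy, w^{m,-}_k = ∫_{-∞}^{-L} w(k/m - y)dy. Then -b̂_k(t) ≥ c û'(k/m - ct) - (F(u^{TW}_t(-L)) - F(a₁)). In particular, for fixed t, k, m, we have -b̂_k(t) → c û'(k/m - ct) > 0 bounds from below as L → ∞. -/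
/-!
Write `ρ y = w (k/m - y)` and `G y = F (û (y - c t))`, so that the traveling-wave equation at
`ξ = k/m - c t` reads `c û'(ξ) = û(ξ) - ∫ ρ G`. Since `G` is increasing, each left-endpoint term
of the truncated Riemann sum, and the right tail term `w^{m,+}_k G(L)`, are bounded by the
corresponding pieces of `∫ ρ G`. On the left tail `G` is only bounded below by `F(a₁)`, which costs
at most `(G(-L) - F(a₁))` times the tail mass, and that mass is at most `∫ ρ = 1`.
-/

open MeasureTheory Set

theorem intervalIntegral.sum_integral_adjacent_intervals_Ico_int {f : ℝ → ℝ} {μ : Measure ℝ}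
    (hf : ∀ u v, IntervalIntegrable f μ u v) (x : ℤ → ℝ) {a b : ℤ} (hab : a ≤ b) :
    ∑ l ∈ Finset.Ico a b, ∫ y in x l..x (l + 1), f y ∂μ = ∫ y in x a..x b, f y ∂μ := by
  induction b, hab using Int.leInduction with
  | base => simp
  | succ b hab ih =>
    rw [← Finset.insert_Ico_right_eq_Ico_add_one hab, Finset.sum_insert (by simp), ih, add_comm,
      intervalIntegral.integral_add_adjacent_intervals (hf _ _) (hf _ _)]

theorem setIntegral_mul_const_le_of_le {α : Type*} [MeasurableSpace α] {μ : Measure α}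
    {ρ G : α → ℝ} {s : Set α} {c : ℝ} (hs : MeasurableSet s) (hρ : ∀ y ∈ s, 0 ≤ ρ y)
    (hρ_int : IntegrableOn ρ s μ) (hρG_int : IntegrableOn (fun y => ρ y * G y) s μ)
    (hcG : ∀ y ∈ s, c ≤ G y) :
    (∫ y in s, ρ y ∂μ) * c ≤ ∫ y in s, ρ y * G y ∂μ := by
  rw [← integral_mul_const]
  exact setIntegral_mono_on (hρ_int.mul_const c) hρG_int hs fun y hy =>
    mul_le_mul_of_nonneg_left (hcG y hy) (hρ y hy)

section WeightedRiemannSum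

variable {ρ G : ℝ → ℝ} {x : ℤ → ℝ}

theorem Monotone.sum_integral_mul_left_endpoint_le (hG : Monotone G) (hx : Monotone x)
    (hρ : 0 ≤ ρ) (hρ_int : Integrable ρ) (hρG_int : Integrable (fun y => ρ y * G y))
    {a b : ℤ} (hab : a ≤ b) :
    ∑ l ∈ Finset.Ico a b, (∫ y in x l..x (l + 1), ρ y) * G (x l)
      ≤ ∫ y in x a..x b, ρ y * G y := by
  rw [← intervalIntegral.sum_integral_adjacent_intervals_Ico_int
    (fun _ _ => hρG_int.intervalIntegrable) x hab]
  refine Finset.sum_le_sum fun l _ => ?_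
  have hl : x l ≤ x (l + 1) := hx (by omega)
  rw [intervalIntegral.integral_of_le hl, intervalIntegral.integral_of_le hl]
  exact setIntegral_mul_const_le_of_le measurableSet_Ioc (fun y _ => hρ y)
    hρ_int.integrableOn hρG_int.integrableOn fun y hy => hG hy.1.le

theorem Monotone.truncated_sum_add_tails_le_integral_mul (hG : Monotone G) {g₀ : ℝ}
    (hg₀ : ∀ y, g₀ ≤ G y) (hx : Monotone x) (hρ : 0 ≤ ρ) (hρ_int : Integrable ρ)
    (hρ_mass : ∫ y, ρ y ≤ 1) (hρG_int : Integrable (fun y => ρ y * G y)) {a b : ℤ} (hab : a ≤ b) :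
    ∑ l ∈ Finset.Ico a b, (∫ y in x l..x (l + 1), ρ y) * G (x l)
      + (∫ y in Ioi (x b), ρ y) * G (x b) + (∫ y in Iic (x a), ρ y) * G (x a)
      ≤ (∫ y, ρ y * G y) + (G (x a) - g₀) := by
  have hsplit : ∫ y, ρ y * G y = (∫ y in Iic (x a), ρ y * G y)
      + (∫ y in x a..x b, ρ y * G y) + ∫ y in Ioi (x b), ρ y * G y := by
    rw [add_assoc, intervalIntegral.integral_interval_add_Ioi hρG_int.integrableOn
      hρG_int.integrableOn, intervalIntegral.integral_Iic_add_Ioi hρG_int.integrableOn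
      hρG_int.integrableOn]
  have hmiddle := hG.sum_integral_mul_left_endpoint_le hx hρ hρ_int hρG_int hab
  have hright : (∫ y in Ioi (x b), ρ y) * G (x b) ≤ ∫ y in Ioi (x b), ρ y * G y :=
    setIntegral_mul_const_le_of_le measurableSet_Ioi (fun y _ => hρ y)
      hρ_int.integrableOn hρG_int.integrableOn fun y hy => hG (le_of_lt hy)
  have hleft : (∫ y in Iic (x a), ρ y) * g₀ ≤ ∫ y in Iic (x a), ρ y * G y :=
    setIntegral_mul_const_le_of_le measurableSet_Iic (fun y _ => hρ y)
      hρ_int.integrableOn hρG_int.integrableOn fun y _ => hg₀ y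
  have hleft_mass : ∫ y in Iic (x a), ρ y ≤ 1 :=
    (setIntegral_le_integral hρ_int (ae_of_all _ hρ)).trans hρ_mass
  have hleft_nonneg : 0 ≤ ∫ y in Iic (x a), ρ y :=
    setIntegral_nonneg measurableSet_Iic fun y _ => hρ y
  nlinarith [hg₀ (x a)]

end WeightedRiemannSum

theorem truncated_drift_lower_bound_general
    (w F uhat uhat' : ℝ → ℝ) (a₁ a₂ c t : ℝ) (m L : ℕ) (k : ℤ)
    (hm : 1 ≤ m)
    (hw_nonneg : ∀ x, 0 ≤ w x)
    (hw_int : Integrable w) (hw_mass : ∫ x, w x = 1)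
    (hF_mono : StrictMono F)
    (huhat_mono : Monotone uhat)
    (huhat_range : ∀ x, uhat x ∈ Set.Icc a₁ a₂)
    (hTW : ∀ ξ, -(c * uhat' ξ) = -uhat ξ + ∫ y, w (ξ - y) * F (uhat y)) :
    -((-(uhat ((k : ℝ) / m - c * t))
        + (∑ l ∈ Finset.Icc (-(m * L : ℤ)) ((m * L : ℤ) - 1),
            (∫ y in ((l : ℝ) / m)..(((l : ℝ) + 1) / m), w ((k : ℝ) / m - y)) *
              F (uhat ((l : ℝ) / m - c * t)))
        + (∫ y in Set.Ioi (L : ℝ), w ((k : ℝ) / m - y)) * F (uhat ((L : ℝ) - c * t))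
        + (∫ y in Set.Iic (-(L : ℝ)), w ((k : ℝ) / m - y)) * F (uhat (-(L : ℝ) - c * t)))) ≥
      c * uhat' ((k : ℝ) / m - c * t) - (F (uhat (-(L : ℝ) - c * t)) - F a₁) := by
  set K : ℝ := (k : ℝ) / m
  set G : ℝ → ℝ := fun y => F (uhat (y - c * t)) with hG_def
  have hG : Monotone G := fun y y' h => hF_mono.monotone (huhat_mono (sub_le_sub_right h _))
  have hG_mem : ∀ y, G y ∈ Icc (F a₁) (F a₂) := fun y =>
    ⟨hF_mono.monotone (huhat_range _).1, hF_mono.monotone (huhat_range _).2⟩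
  have hρ_int : Integrable fun y => w (K - y) := hw_int.comp_sub_left K
  have hρ_mass : ∫ y, w (K - y) = 1 := (integral_sub_left_eq_self w volume K).trans hw_mass
  have hρG_int : Integrable fun y => w (K - y) * G y :=
    hρ_int.mul_bdd hG.measurable.aestronglyMeasurable <| ae_of_all _ fun y =>
      (Real.norm_eq_abs _).trans_le (abs_le_max_abs_abs (hG_mem y).1 (hG_mem y).2)
  have hdrift : c * uhat' (K - c * t) = uhat (K - c * t) - ∫ y, w (K - y) * G y := by
    have hshift := integral_sub_right_eq_self (μ := volume)
      (fun y => w (K - c * t - y) * F (uhat y)) (c * t)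
    simp only [sub_sub_sub_cancel_right] at hshift
    linarith [hTW (K - c * t)]
  have hgrid : Monotone fun l : ℤ => (l : ℝ) / m := fun l l' h =>
    div_le_div_of_nonneg_right (Int.cast_le.mpr h) m.cast_nonneg
  have key := hG.truncated_sum_add_tails_le_integral_mul (fun y => (hG_mem y).1) hgrid
    (fun y => hw_nonneg _) hρ_int hρ_mass.le hρG_int (a := -(m * L : ℤ)) (b := m * L)
    (neg_le_self (by positivity))
  have hm0 : (m : ℝ) ≠ 0 := Nat.cast_ne_zero.mpr (by omega)
  simp only [hG_def, Int.cast_add, Int.cast_one, Int.cast_neg, Int.cast_mul, Int.cast_natCast,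
    neg_div, mul_div_cancel_left₀ _ hm0] at key
  rw [Finset.Icc_sub_one_right_eq_Ico]
  linarith

/-- monotone lower bound for the (negative) truncated drift at the traveling
wave: `-b̂_k(t) ≥ c û'(k/m - ct) - (F(u^{TW}_t(-L)) - F(a₁))`. -/
theorem truncated_drift_lower_bound
    (w F uhat uhat' : ℝ → ℝ) (a₁ a₂ c t : ℝ) (m L : ℕ) (k : ℤ)
    (hm : 1 ≤ m) (hL : 0 < L)
    (hw_nonneg : ∀ x, 0 ≤ w x)
    (hw_symm : ∀ x, w (-x) = w x)
    (hw_int : Integrable w) (hw_mass : ∫ x, w x = 1)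
    (hF_mono : StrictMono F) (hF_range : ∀ x, F x ∈ Set.Icc (0:ℝ) 1)
    (huhat_deriv : ∀ x, HasDerivAt uhat (uhat' x) x)
    (huhat_mono : Monotone uhat)
    (huhat_range : ∀ x, uhat x ∈ Set.Icc a₁ a₂)
    (hc : 0 < c)
    (hTW : ∀ ξ, -(c * uhat' ξ) = -uhat ξ + ∫ y, w (ξ - y) * F (uhat y))
    (hk : k ∈ Finset.Icc (-(m * L : ℤ)) ((m * L : ℤ) - 1)) :
    -((-(uhat ((k : ℝ) / m - c * t))
        + (∑ l ∈ Finset.Icc (-(m * L : ℤ)) ((m * L : ℤ) - 1),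
            (∫ y in ((l : ℝ) / m)..(((l : ℝ) + 1) / m), w ((k : ℝ) / m - y)) *
              F (uhat ((l : ℝ) / m - c * t)))
        + (∫ y in Set.Ioi (L : ℝ), w ((k : ℝ) / m - y)) * F (uhat ((L : ℝ) - c * t))
        + (∫ y in Set.Iic (-(L : ℝ)), w ((k : ℝ) / m - y)) * F (uhat (-(L : ℝ) - c * t)))) ≥
      c * uhat' ((k : ℝ) / m - c * t) - (F (uhat (-(L : ℝ) - c * t)) - F a₁) :=
  truncated_drift_lower_bound_general w F uhat uhat' a₁ a₂ c t m L k hm hw_nonneg hw_int hw_mass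
    hF_mono huhat_mono huhat_range hTW
end

section
/- Averaged-noise Hilbert–Schmidt bound: let q be a symmetric kernel with sup_x ‖q(x,·)‖_{L²} < ∞, √Q the associated integral operator, I^m_l = [l/m,(l+1)/m), J^m_l = (l/m − 1/(4m), l/m + 1/(4m)), and Φ^m(u) = 2m ∑_l ⟨u, 𝟙_{J^m_l}⟩ 𝟙_{I^m_l}. Then for any orthonormal basis (e_k) of L²(ℝ): ∑_k (Φ^m(√Q e_k))²(x) ≤ sup_z ‖q(z,·)‖²_{L²} · 𝟙_{[-L^m, L^m)}(x) pointwise. -/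
/-!
On the grid cell `I^m_l` containing `x`, `Φ^m(√Q e_k)(x)` is the mean of `y ↦ ⟨q(y,·), e_k⟩` over
`J^m_l`, an interval of length `1/(2m)`. By Bessel, `∑_k ⟨q(y,·), e_k⟩² ≤ ‖q(y,·)‖² ≤ Csq` for every
`y`, and Cauchy–Schwarz carries this pointwise bound over to the means. Outside `[-L, L)` no cell
of the grid contains `x`.
-/

open MeasureTheory Set

section SquareSums

variable {α ι : Type*} [MeasurableSpace α] {μ : Measure α}

/-- If the family of squared coefficients is not summable, its `tsum` is the junk value `0`;
then `∫ f² = 0`, so `f = 0` a.e. and every coefficient vanishes anyway. -/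
lemma sum_sq_integral_mul_le_integral_sq {f : α → ℝ} (hf : MemLp f 2 μ) {e : ι → α → ℝ}
    (hparseval : ∑' k, (∫ y, f y * e k y ∂μ) ^ 2 = ∫ y, f y ^ 2 ∂μ) (F : Finset ι) :
    ∑ k ∈ F, (∫ y, f y * e k y ∂μ) ^ 2 ≤ ∫ y, f y ^ 2 ∂μ := by
  by_cases hsum : Summable fun k => (∫ y, f y * e k y ∂μ) ^ 2
  · exact hparseval ▸ hsum.sum_le_tsum F fun k _ => sq_nonneg _
  have hf_sq : ∫ y, f y ^ 2 ∂μ = 0 := by rw [← hparseval, tsum_eq_zero_of_not_summable hsum]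
  have hf_zero : f =ᵐ[μ] 0 := by
    filter_upwards [(integral_eq_zero_iff_of_nonneg (fun y => sq_nonneg (f y))
      hf.integrable_sq).1 hf_sq] with y hy
    exact pow_eq_zero_iff two_ne_zero |>.1 hy
  have hcoeff (k : ι) : ∫ y, f y * e k y ∂μ = 0 :=
    integral_eq_zero_of_ae <| by filter_upwards [hf_zero] with y hy; simp [hy]
  simp [hcoeff, hf_sq]

lemma integrable_integral_mul (g : α → ℝ) : Integrable (fun y => (∫ z, g z ∂μ) * g y) μ := by
  by_cases hg : Integrable g μ
  · exact hg.const_mul _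
  · simp [integral_undef hg]

/-- Cauchy–Schwarz against the vector `a` of averages itself: `‖a‖² = ∫ ⟨a, g⟩ ≤ ‖a‖ √C μ(α)`. -/
lemma sum_sq_integral_le_of_sum_sq_le [IsFiniteMeasure μ] (g : ι → α → ℝ) (F : Finset ι)
    {C : ℝ} (hC : 0 ≤ C) (hbound : ∀ᵐ y ∂μ, ∑ k ∈ F, g k y ^ 2 ≤ C) :
    ∑ k ∈ F, (∫ y, g k y ∂μ) ^ 2 ≤ C * μ.real univ ^ 2 := by
  set a : ι → ℝ := fun k => ∫ y, g k y ∂μ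
  set S := ∑ k ∈ F, a k ^ 2
  have hS_nonneg : 0 ≤ S := Finset.sum_nonneg fun k _ => sq_nonneg (a k)
  have hS_integral : S = ∫ y, ∑ k ∈ F, a k * g k y ∂μ := by
    rw [integral_finsetSum F fun k _ => integrable_integral_mul (g k)]
    simp only [integral_const_mul, a, S, sq]
  have hpointwise : ∀ᵐ y ∂μ, ∑ k ∈ F, a k * g k y ≤ √(S * C) := by
    filter_upwards [hbound] with y hy
    refine (le_abs_self _).trans (Real.abs_le_sqrt ?_)
    exact (Finset.sum_mul_sq_le_sq_mul_sq F a (g · y)).trans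
      (mul_le_mul_of_nonneg_left hy hS_nonneg)
  have hS_le : S ≤ √(S * C) * μ.real univ := by
    calc S = ∫ y, ∑ k ∈ F, a k * g k y ∂μ := hS_integral
      _ ≤ ∫ _, √(S * C) ∂μ :=
          integral_mono_ae (integrable_finsetSum F fun k _ => integrable_integral_mul (g k))
            (integrable_const _) hpointwise
      _ = √(S * C) * μ.real univ := by rw [integral_const, smul_eq_mul, mul_comm]
  have hS_sq : S * S ≤ C * μ.real univ ^ 2 * S := by
    calc S * S ≤ (√(S * C) * μ.real univ) ^ 2 := by
          rw [sq]; exact mul_le_mul hS_le hS_le hS_nonneg (hS_nonneg.trans hS_le)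
      _ = C * μ.real univ ^ 2 * S := by rw [mul_pow, Real.sq_sqrt (mul_nonneg hS_nonneg hC)]; ring
  rcases hS_nonneg.eq_or_lt with hS_zero | hS_pos
  · rw [← hS_zero]; positivity
  · exact le_of_mul_le_mul_right hS_sq hS_pos

end SquareSums

section Grid

lemma mem_Ico_div_iff_floor_eq {m : ℝ} (hm : 0 < m) (x : ℝ) (l : ℤ) :
    x ∈ Ico (l / m) ((l + 1) / m) ↔ ⌊m * x⌋ = l := by
  rw [Int.floor_eq_iff, mem_Ico, div_le_iff₀ hm, lt_div_iff₀ hm, mul_comm x]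

lemma sum_mul_indicator_Ico_div {m : ℝ} (hm : 0 < m) (s : Finset ℤ) (c : ℤ → ℝ) (x : ℝ) :
    ∑ l ∈ s, c l * indicator (Ico ((l : ℝ) / m) ((l + 1) / m)) (fun _ => (1 : ℝ)) x =
      if ⌊m * x⌋ ∈ s then c ⌊m * x⌋ else 0 := by
  classical
  simp only [indicator_apply, mem_Ico_div_iff_floor_eq hm, mul_ite, mul_one, mul_zero]
  exact Finset.sum_ite_eq s _ c

lemma floor_mul_mem_Icc_iff {m : ℕ} (hm : 0 < m) (L : ℕ) (x : ℝ) :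
    ⌊(m : ℝ) * x⌋ ∈ Finset.Icc (-(m * L : ℤ)) ((m * L : ℤ) - 1) ↔ x ∈ Ico (-(L : ℝ)) L := by
  have hm' : (0 : ℝ) < m := by exact_mod_cast hm
  rw [Finset.mem_Icc, Int.le_sub_one_iff, Int.le_floor, Int.floor_lt, mem_Ico]
  push_cast
  rw [← mul_neg, mul_le_mul_iff_right₀ hm', mul_lt_mul_iff_right₀ hm']

end Grid

theorem averaged_noise_hilbert_schmidt_bound_general
    (q : ℝ → ℝ → ℝ) (Csq : ℝ) (m L : ℕ)
    (hq_L2 : ∀ x, MemLp (q x) 2 (volume : Measure ℝ))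
    (hq_bdd : ∀ x, ∫ y, (q x y) ^ 2 ≤ Csq)
    (e : ℕ → ℝ → ℝ)
    (he_parseval : ∀ f : ℝ → ℝ, MemLp f 2 (volume : Measure ℝ) →
      ∑' k, (∫ y, f y * e k y) ^ 2 = ∫ y, (f y) ^ 2) :
    ∀ x : ℝ,
      (∑' k : ℕ,
        (∑ l ∈ Finset.Icc (-(m * L : ℤ)) ((m * L : ℤ) - 1),
          (2 * (m : ℝ) *
            ∫ y in Set.Ioo ((l : ℝ) / m - 1 / (4 * m)) ((l : ℝ) / m + 1 / (4 * m)),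
              (∫ z, q y z * e k z)) *
          Set.indicator (Set.Ico ((l : ℝ) / m) (((l : ℝ) + 1) / m)) (fun _ => (1:ℝ)) x) ^ 2) ≤
      Set.indicator (Set.Ico (-(L : ℝ)) (L : ℝ)) (fun _ => Csq) x := by
  intro x
  have hCsq : 0 ≤ Csq := (integral_nonneg fun y => sq_nonneg (q 0 y)).trans (hq_bdd 0)
  rcases Nat.eq_zero_or_pos m with rfl | hm
  · simp [indicator_nonneg (fun _ _ => hCsq)]
  have hm' : (0 : ℝ) < m := by exact_mod_cast hm
  simp only [sum_mul_indicator_Ico_div hm']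
  by_cases hx : x ∈ Ico (-(L : ℝ)) L
  swap
  · simp [(floor_mul_mem_Icc_iff hm L x).not.2 hx, hx]
  simp only [(floor_mul_mem_Icc_iff hm L x).2 hx, if_true, indicator_of_mem hx]
  refine tsum_le_of_sum_le' hCsq fun F => ?_
  set l : ℤ := ⌊(m : ℝ) * x⌋
  set J := Ioo ((l : ℝ) / m - 1 / (4 * m)) ((l : ℝ) / m + 1 / (4 * m))
  have hJ : volume.real J = 1 / (2 * m) := by
    rw [Real.volume_real_Ioo_of_le (by linarith [show 0 ≤ 1 / (4 * (m : ℝ)) by positivity])]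
    ring
  simp only [mul_pow, ← Finset.mul_sum]
  calc _ ≤ 2 ^ 2 * (m : ℝ) ^ 2 * (Csq * volume.real J ^ 2) := by
        rw [← measureReal_restrict_apply_univ]
        gcongr
        refine sum_sq_integral_le_of_sum_sq_le (μ := volume.restrict J) _ F hCsq
          (ae_of_all _ fun y => ?_)
        exact (sum_sq_integral_mul_le_integral_sq (hq_L2 y) (he_parseval _ (hq_L2 y)) F).trans
          (hq_bdd y)
    _ = Csq := by rw [hJ]; field_simp

/-- averaged-noise Hilbert–Schmidt bound:
`∑_k (Φ^m(√Q e_k))²(x) ≤ (sup_z ‖q(z,·)‖²) 𝟙_{[-L^m, L^m)}(x)` pointwise, where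
`Φ^m(u) = 2m ∑_l ⟨u, 𝟙_{J^m_l}⟩ 𝟙_{I^m_l}` and `(√Q h)(x) = ∫ q(x,y) h(y) dy`. -/
theorem averaged_noise_hilbert_schmidt_bound
    (q : ℝ → ℝ → ℝ) (Csq : ℝ) (m L : ℕ) (hm : 1 ≤ m)
    (hq_symm : ∀ x y, q x y = q y x)
    (hq_L2 : ∀ x, MemLp (q x) 2 (volume : Measure ℝ))
    (hq_bdd : ∀ x, ∫ y, (q x y) ^ 2 ≤ Csq)
    (e : ℕ → ℝ → ℝ)
    (he_parseval : ∀ f : ℝ → ℝ, MemLp f 2 (volume : Measure ℝ) →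
      ∑' k, (∫ y, f y * e k y) ^ 2 = ∫ y, (f y) ^ 2) :
    ∀ x : ℝ,
      (∑' k : ℕ,
        (∑ l ∈ Finset.Icc (-(m * L : ℤ)) ((m * L : ℤ) - 1),
          (2 * (m : ℝ) *
            ∫ y in Set.Ioo ((l : ℝ) / m - 1 / (4 * m)) ((l : ℝ) / m + 1 / (4 * m)),
              (∫ z, q y z * e k z)) *
          Set.indicator (Set.Ico ((l : ℝ) / m) (((l : ℝ) + 1) / m)) (fun _ => (1:ℝ)) x) ^ 2) ≤
      Set.indicator (Set.Ico (-(L : ℝ)) (L : ℝ)) (fun _ => Csq) x :=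
  averaged_noise_hilbert_schmidt_bound_general q Csq m L hq_L2 hq_bdd e he_parseval
end

section
/- Discretization error of convolution: for w ∈ C¹ with w' ∈ L¹ and any g ∈ L²(ℝ) supported in [-L,L] with |g| ≤ G pointwise, the piecewise-constant approximation error satisfies ∑_k ∫_{k/m}^{(k+1)/m} (∫_{-L}^{L} (w(k/m − y) − w(x − y)) g(y) dy)² dx ≤ (1/m²) ‖w'‖²_{L¹} ‖g‖²_{L²}. -/
/-!
For `x ∈ [a, b]` the fundamental theorem of calculus bounds `|w (a - y) - w (x - y)|` by the
window integral `D y = ∫_a^b |w' (z - y)| dz`, and a weighted Cauchy–Schwarz inequality then bounds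
the squared inner integral by `(∫ D) (∫ D g²)`. Since `D` is the convolution of `𝟙_(a, b]` with
`|w'|`, `∫ D = (b - a) ‖w'‖₁`; integrating over `x ∈ [a, b]` contributes another factor `b - a`.
Finally, the windows of the cells of the partition tile one interval, so `∑ₖ Dₖ ≤ ‖w'‖₁`.
-/

open MeasureTheory intervalIntegral Convolution

theorem sum_integral_adjacent_intervals_Ico_int {E : Type*} [NormedAddCommGroup E]
    [NormedSpace ℝ E] {μ : Measure ℝ} {f : ℝ → E} {a : ℤ → ℝ} {p q : ℤ} (hpq : p ≤ q)
    (hint : ∀ k ∈ Finset.Ico p q, IntervalIntegrable f μ (a k) (a (k + 1))) :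
    ∑ k ∈ Finset.Ico p q, ∫ x in a k..a (k + 1), f x ∂μ = ∫ x in a p..a q, f x ∂μ := by
  suffices IntervalIntegrable f μ (a p) (a q) ∧
      ∑ k ∈ Finset.Ico p q, ∫ x in a k..a (k + 1), f x ∂μ = ∫ x in a p..a q, f x ∂μ from this.2
  induction q, hpq using Int.leInduction with
  | base => simp
  | succ q hpq ih =>
    have hq : q ∈ Finset.Ico p (q + 1) := Finset.mem_Ico.2 ⟨hpq, Int.lt_succ q⟩
    obtain ⟨hint_pq, hsum⟩ := ih fun k hk ↦ hint k (Finset.Ico_subset_Ico_right (by omega) hk)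
    refine ⟨hint_pq.trans (hint q hq), ?_⟩
    rw [← Finset.insert_Ico_right_eq_Ico_add_one hpq, Finset.sum_insert Finset.right_notMem_Ico,
      hsum, add_comm, integral_add_adjacent_intervals hint_pq (hint q hq)]

theorem abs_sub_le_integral_abs_of_hasDerivAt {w w' : ℝ → ℝ} {a b x : ℝ}
    (hw : ∀ t ∈ Set.uIcc a b, HasDerivAt w (w' t) t) (hw' : IntervalIntegrable w' volume a b)
    (hax : a ≤ x) (hxb : x ≤ b) : |w a - w x| ≤ ∫ t in a..b, |w' t| := by
  have hsub : Set.uIcc a x ⊆ Set.uIcc a b :=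
    Set.uIcc_subset_uIcc_left (Set.mem_uIcc.2 (.inl ⟨hax, hxb⟩))
  calc |w a - w x| = |∫ t in a..x, w' t| := by
        rw [abs_sub_comm,
          integral_eq_sub_of_hasDerivAt (fun t ht ↦ hw t (hsub ht)) (hw'.mono_set hsub)]
    _ ≤ ∫ t in a..x, |w' t| := abs_integral_le_integral_abs hax
    _ ≤ ∫ t in a..b, |w' t| :=
        integral_mono_interval le_rfl hax hxb (.of_forall fun _ ↦ abs_nonneg _) hw'.abs

theorem sq_integral_mul_le_of_abs_le {α : Type*} [MeasurableSpace α] {μ : Measure α}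
    {F D g : α → ℝ} (hFD : ∀ᵐ x ∂μ, |F x| ≤ D x) (hD : Integrable D μ)
    (hDg : Integrable (fun x ↦ D x * g x ^ 2) μ) :
    (∫ x, F x * g x ∂μ) ^ 2 ≤ (∫ x, D x ∂μ) * ∫ x, D x * g x ^ 2 ∂μ := by
  have hD0 : ∀ᵐ x ∂μ, 0 ≤ D x := hFD.mono fun x hx ↦ (abs_nonneg _).trans hx
  have hA : 0 ≤ ∫ x, D x ∂μ := integral_nonneg_of_ae hD0
  have hC : 0 ≤ ∫ x, D x * g x ^ 2 ∂μ :=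
    integral_nonneg_of_ae (hD0.mono fun x hx ↦ mul_nonneg hx (sq_nonneg _))
  by_cases hFg : Integrable (fun x ↦ F x * g x) μ
  swap
  · simpa [integral_undef hFg] using mul_nonneg hA hC
  have hquad : ∀ t : ℝ, 0 ≤ (∫ x, D x ∂μ) * (t * t) + (-2 * ∫ x, F x * g x ∂μ) * t +
      ∫ x, D x * g x ^ 2 ∂μ := by
    intro t
    have hpos : 0 ≤ ∫ x, (t * t) * D x + (-2 * t) * (F x * g x) + D x * g x ^ 2 ∂μ := by
      refine integral_nonneg_of_ae (hFD.mono fun x hx ↦ show 0 ≤ _ from ?_)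
      obtain ⟨hF₁, hF₂⟩ := abs_le.1 hx
      -- `D (t² + g²) - 2 t F g = (D - F) (t + g)² / 2 + (D + F) (t - g)² / 2`
      nlinarith [mul_nonneg (sub_nonneg.2 hF₂) (sq_nonneg (t + g x)),
        mul_nonneg (neg_le_iff_add_nonneg.1 hF₁) (sq_nonneg (t - g x))]
    have hint : Integrable (fun x ↦ (t * t) * D x + (-2 * t) * (F x * g x)) μ :=
      (hD.const_mul _).add (hFg.const_mul _)
    rw [integral_add hint hDg, integral_add (hD.const_mul _) (hFg.const_mul _),
      MeasureTheory.integral_const_mul, MeasureTheory.integral_const_mul] at hpos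
    linarith
  have hdisc := discrim_le_zero hquad
  rw [discrim] at hdisc
  nlinarith

noncomputable def windowIntegral (φ : ℝ → ℝ) (a b y : ℝ) : ℝ := ∫ z in a..b, φ (z - y)

section windowIntegral

variable {φ : ℝ → ℝ} {a b : ℝ}

theorem windowIntegral_eq_convolution (hab : a ≤ b) :
    windowIntegral φ a b =
      (Set.Ioc a b).indicator 1 ⋆[ContinuousLinearMap.lsmul ℝ ℝ] fun t ↦ φ (-t) := by
  ext y
  rw [windowIntegral, integral_of_le hab, convolution_lsmul,
    ← MeasureTheory.integral_indicator measurableSet_Ioc]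
  congr 1 with z
  by_cases hz : z ∈ Set.Ioc a b <;> simp [hz]

theorem integrable_indicator_Ioc_one : Integrable ((Set.Ioc a b).indicator (1 : ℝ → ℝ)) :=
  (integrable_indicator_iff measurableSet_Ioc).2 (integrableOn_const measure_Ioc_lt_top.ne)

theorem integrable_windowIntegral (hφ : Integrable φ) (hab : a ≤ b) :
    Integrable (windowIntegral φ a b) := by
  rw [windowIntegral_eq_convolution hab]
  exact integrable_indicator_Ioc_one.integrable_convolution _ hφ.comp_neg

theorem integral_windowIntegral (hφ : Integrable φ) (hab : a ≤ b) :
    ∫ y, windowIntegral φ a b y = (b - a) * ∫ t, φ t := by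
  rw [windowIntegral_eq_convolution hab, integral_convolution (hf := integrable_indicator_Ioc_one)
    (hg := hφ.comp_neg), integral_indicator_one measurableSet_Ioc, integral_neg_eq_self]
  simp [hab, sub_mul]

theorem windowIntegral_nonneg (hφ₀ : 0 ≤ φ) (hab : a ≤ b) (y : ℝ) : 0 ≤ windowIntegral φ a b y :=
  integral_nonneg hab fun z _ ↦ hφ₀ (z - y)

theorem windowIntegral_le_integral (hφ₀ : 0 ≤ φ) (hφ : Integrable φ) (hab : a ≤ b) (y : ℝ) :
    windowIntegral φ a b y ≤ ∫ t, φ t := by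
  rw [windowIntegral, integral_comp_sub_right, integral_of_le (by linarith)]
  exact setIntegral_le_integral hφ (.of_forall hφ₀)

theorem sum_windowIntegral_le_integral (hφ₀ : 0 ≤ φ) (hφ : Integrable φ) {a : ℤ → ℝ}
    (ha : Monotone a) (p q : ℤ) (y : ℝ) :
    ∑ k ∈ Finset.Ico p q, windowIntegral φ (a k) (a (k + 1)) y ≤ ∫ t, φ t := by
  rcases lt_or_ge q p with hqp | hpq
  · rw [Finset.Ico_eq_empty_of_le hqp.le, Finset.sum_empty]
    exact integral_nonneg hφ₀
  calc ∑ k ∈ Finset.Ico p q, windowIntegral φ (a k) (a (k + 1)) y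
      = windowIntegral φ (a p) (a q) y :=
        sum_integral_adjacent_intervals_Ico_int hpq fun _ _ ↦
          (hφ.comp_sub_right y).intervalIntegrable
    _ ≤ ∫ t, φ t := windowIntegral_le_integral hφ₀ hφ (ha hpq) y

theorem abs_sub_le_windowIntegral {w w' : ℝ → ℝ} (hw : ∀ t, HasDerivAt w (w' t) t)
    (hw' : Integrable w') {x : ℝ} (hax : a ≤ x) (hxb : x ≤ b) (y : ℝ) :
    |w (a - y) - w (x - y)| ≤ windowIntegral (fun t ↦ |w' t|) a b y := by
  rw [windowIntegral, integral_comp_sub_right (fun t ↦ |w' t|)]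
  exact abs_sub_le_integral_abs_of_hasDerivAt (fun t _ ↦ hw t) hw'.intervalIntegrable
    (by linarith) (by linarith)

theorem Integrable.windowIntegral_mul {f : ℝ → ℝ} (hφ₀ : 0 ≤ φ) (hφ : Integrable φ)
    (hab : a ≤ b) (hf : Integrable f) : Integrable (fun y ↦ windowIntegral φ a b y * f y) :=
  hf.bdd_mul (integrable_windowIntegral hφ hab).aestronglyMeasurable <| .of_forall fun y ↦ by
    rw [Real.norm_of_nonneg (windowIntegral_nonneg hφ₀ hab y)]
    exact windowIntegral_le_integral hφ₀ hφ hab y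

end windowIntegral

section discretization

variable {w w' g : ℝ → ℝ}

theorem integral_sq_setIntegral_sub_mul_le (hw : ∀ x, HasDerivAt w (w' x) x) (hw' : Integrable w')
    (hg : MemLp g 2) (s : Set ℝ) {a b : ℝ} (hab : a ≤ b) :
    ∫ x in a..b, (∫ y in s, (w (a - y) - w (x - y)) * g y) ^ 2 ≤
      (b - a) ^ 2 * (∫ z, |w' z|) *
        ∫ y in s, windowIntegral (fun t ↦ |w' t|) a b y * g y ^ 2 := by
  set D := windowIntegral (fun t ↦ |w' t|) a b
  have hφ₀ : 0 ≤ fun t ↦ |w' t| := fun t ↦ abs_nonneg (w' t)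
  have hD : Integrable D := integrable_windowIntegral hw'.abs hab
  have hmass : ∫ y in s, D y ≤ (b - a) * ∫ z, |w' z| :=
    (setIntegral_le_integral hD (.of_forall (windowIntegral_nonneg hφ₀ hab))).trans_eq
      (integral_windowIntegral hw'.abs hab)
  have hpointwise : ∀ x ∈ Set.uIoc a b, ‖(∫ y in s, (w (a - y) - w (x - y)) * g y) ^ 2‖ ≤
      (b - a) * (∫ z, |w' z|) * ∫ y in s, D y * g y ^ 2 := by
    intro x hx
    rw [Set.uIoc_of_le hab] at hx
    rw [Real.norm_of_nonneg (sq_nonneg _)]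
    have hFD := abs_sub_le_windowIntegral hw hw' hx.1.le hx.2
    refine (sq_integral_mul_le_of_abs_le (.of_forall hFD) hD.restrict
      (Integrable.windowIntegral_mul hφ₀ hw'.abs hab hg.integrable_sq).restrict).trans ?_
    exact mul_le_mul_of_nonneg_right hmass
      (integral_nonneg fun y ↦ mul_nonneg (windowIntegral_nonneg hφ₀ hab y) (sq_nonneg _))
  calc ∫ x in a..b, (∫ y in s, (w (a - y) - w (x - y)) * g y) ^ 2
      ≤ ‖∫ x in a..b, (∫ y in s, (w (a - y) - w (x - y)) * g y) ^ 2‖ := Real.le_norm_self _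
    _ ≤ (b - a) * (∫ z, |w' z|) * (∫ y in s, D y * g y ^ 2) * |b - a| :=
        norm_integral_le_of_norm_le_const hpointwise
    _ = _ := by rw [abs_of_nonneg (sub_nonneg.2 hab)]; ring

theorem sum_integral_sq_setIntegral_sub_mul_le (hw : ∀ x, HasDerivAt w (w' x) x)
    (hw' : Integrable w') (hg : MemLp g 2) (s : Set ℝ) {a : ℤ → ℝ} (ha : Monotone a) {h : ℝ}
    (hmesh : ∀ k, a (k + 1) - a k ≤ h) (p q : ℤ) :
    ∑ k ∈ Finset.Ico p q, ∫ x in a k..a (k + 1), (∫ y in s, (w (a k - y) - w (x - y)) * g y) ^ 2 ≤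
      h ^ 2 * (∫ z, |w' z|) ^ 2 * ∫ y, g y ^ 2 := by
  set C := ∫ z, |w' z|
  set D := fun k ↦ windowIntegral (fun t ↦ |w' t|) (a k) (a (k + 1))
  have hφ₀ : 0 ≤ fun t ↦ |w' t| := fun t ↦ abs_nonneg (w' t)
  have hC : 0 ≤ C := integral_nonneg hφ₀
  have hstep : ∀ k, a k ≤ a (k + 1) := fun k ↦ ha (Int.le_add_one le_rfl)
  have hDg : ∀ k, Integrable (fun y ↦ D k y * g y ^ 2) :=
    fun k ↦ Integrable.windowIntegral_mul hφ₀ hw'.abs (hstep k) hg.integrable_sq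
  have htiling : ∫ y in s, (∑ k ∈ Finset.Ico p q, D k y) * g y ^ 2 ≤ C * ∫ y, g y ^ 2 := by
    calc ∫ y in s, (∑ k ∈ Finset.Ico p q, D k y) * g y ^ 2
        ≤ ∫ y in s, C * g y ^ 2 := by
          refine integral_mono ?_ (hg.integrable_sq.const_mul C).restrict fun y ↦
            mul_le_mul_of_nonneg_right (sum_windowIntegral_le_integral hφ₀ hw'.abs ha p q y)
              (sq_nonneg _)
          simpa only [Finset.sum_mul] using (integrable_finsetSum _ fun k _ ↦ hDg k).restrict
      _ = C * ∫ y in s, g y ^ 2 := integral_const_mul C _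
      _ ≤ C * ∫ y, g y ^ 2 := mul_le_mul_of_nonneg_left
          (setIntegral_le_integral hg.integrable_sq (.of_forall fun y ↦ sq_nonneg _)) hC
  calc ∑ k ∈ Finset.Ico p q, ∫ x in a k..a (k + 1), (∫ y in s, (w (a k - y) - w (x - y)) * g y) ^ 2
      ≤ ∑ k ∈ Finset.Ico p q, h ^ 2 * C * ∫ y in s, D k y * g y ^ 2 := by
        refine Finset.sum_le_sum fun k _ ↦
          (integral_sq_setIntegral_sub_mul_le hw hw' hg s (hstep k)).trans ?_
        gcongr
        · exact integral_nonneg fun y ↦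
            mul_nonneg (windowIntegral_nonneg hφ₀ (hstep k) y) (sq_nonneg _)
        · exact sub_nonneg.2 (hstep k)
        · exact hmesh k
    _ = h ^ 2 * C * ∫ y in s, (∑ k ∈ Finset.Ico p q, D k y) * g y ^ 2 := by
        rw [← Finset.mul_sum, ← integral_finsetSum _ fun k _ ↦ (hDg k).restrict]
        simp_rw [Finset.sum_mul]
    _ ≤ h ^ 2 * C * (C * ∫ y, g y ^ 2) := by gcongr
    _ = h ^ 2 * C ^ 2 * ∫ y, g y ^ 2 := by ring

end discretization

theorem convolution_discretization_error_general
    (w w' g : ℝ → ℝ) (m L : ℕ)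
    (hw_deriv : ∀ x, HasDerivAt w (w' x) x)
    (hw'_int : Integrable w')
    (hg_L2 : MemLp g 2 (volume : Measure ℝ)) :
    ∑ k ∈ Finset.Icc (-(m * L : ℤ)) ((m * L : ℤ) - 1),
        ∫ x in ((k : ℝ) / m)..(((k : ℝ) + 1) / m),
          (∫ y in (-(L : ℝ))..(L : ℝ), (w ((k : ℝ) / m - y) - w (x - y)) * g y) ^ 2 ≤
      (1 / (m : ℝ) ^ 2) * (∫ z, |w' z|) ^ 2 * ∫ y, (g y) ^ 2 := by
  have ha : Monotone fun k : ℤ ↦ (k : ℝ) / m := fun i j hij ↦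
    div_le_div_of_nonneg_right (Int.cast_le.2 hij) m.cast_nonneg
  have hmesh : ∀ k : ℤ, ((k + 1 : ℤ) : ℝ) / m - (k : ℝ) / m ≤ 1 / m := fun k ↦ by
    rw [← sub_div, Int.cast_add, Int.cast_one, add_sub_cancel_left]
  have hbound := sum_integral_sq_setIntegral_sub_mul_le hw_deriv hw'_int hg_L2
    (Set.Ioc (-(L : ℝ)) L) ha hmesh (-(m * L : ℤ)) (m * L)
  push_cast at hbound
  rw [Finset.Icc_sub_one_right_eq_Ico, ← one_div_pow]
  simpa only [integral_of_le (neg_le_self L.cast_nonneg)] using hbound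

/-- discretization error of the convolution:
`∑_k ∫_{I^m_k} (∫_{-L}^L (w(k/m − y) − w(x − y)) g(y) dy)² dx ≤ (1/m²)‖w'‖²_{L¹}‖g‖²_{L²}`. -/
theorem convolution_discretization_error
    (w w' g : ℝ → ℝ) (G : ℝ) (m L : ℕ) (hm : 1 ≤ m)
    (hw_deriv : ∀ x, HasDerivAt w (w' x) x)
    (hw'_int : Integrable w')
    (hg_L2 : MemLp g 2 (volume : Measure ℝ))
    (hg_supp : ∀ x, x ∉ Set.Icc (-(L : ℝ)) (L : ℝ) → g x = 0)
    (hg_bdd : ∀ x, |g x| ≤ G) :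
    ∑ k ∈ Finset.Icc (-(m * L : ℤ)) ((m * L : ℤ) - 1),
        ∫ x in ((k : ℝ) / m)..(((k : ℝ) + 1) / m),
          (∫ y in (-(L : ℝ))..(L : ℝ), (w ((k : ℝ) / m - y) - w (x - y)) * g y) ^ 2 ≤
      (1 / (m : ℝ) ^ 2) * (∫ z, |w' z|) ^ 2 * ∫ y, (g y) ^ 2 :=
  convolution_discretization_error_general w w' g m L hw_deriv hw'_int hg_L2
end
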